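/- Let ε > 0, let h ∈ C([0,L]) be nonnegative, let H ∈ C²([0,L]) be the solution of H − ε² ∂ₓ²H = h on (0,L) with ∂ₓH(0) = ∂ₓH(L) = 0, let g ∈ C([0,L]), and let ξ ∈ C²([0,L]) with ξ(0) = ξ(L) = 0 satisfy ξ − ε² ∂ₓ²(H ξ) = g on (0,L). Then ‖ξ‖_{L₁(0,L)} ≤ ‖g‖_{L₁(0,L)}. -/

import Mathlib

open MeasureTheory Set

/-!
Multiply the equation for `ξ` by the regularized sign `β_δ(ξ) = ξ / √(ξ² + δ²)`
(`smoothSign δ`) and integrate over `(0, L)`. Since `ξ` vanishes at the endpoints and `H'`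
does too, two integrations by parts give
`∫ β_δ(ξ) (Hξ)'' = ∫ H'' Γ_δ(ξ) - ∫ H β_δ'(ξ) ξ'²`,
where `Γ_δ = smoothSignDefect δ` satisfies `Γ_δ'(t) = t β_δ'(t)`, `Γ_δ(0) = 0` and
`0 ≤ Γ_δ ≤ δ`. By the maximum principle `H ≥ 0`, so the last integral is nonnegative, and
`ε² H'' = H - h ≤ H` bounds `ε² ∫ H'' Γ_δ(ξ)` by `δ ∫ H`. With `|t| - δ ≤ t β_δ(t)` and
`|β_δ| ≤ 1` this gives `‖ξ‖₁ ≤ ‖g‖₁ + δ (L + ∫ H)` for every `δ > 0`.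

The maximum principle: at a negative minimum of `H` we have `H' = 0` (at an interior point
since it is a minimum, at an endpoint by the Neumann condition), while `H'' < 0` makes `H`
strictly concave nearby, so `H` is strictly smaller next to it.
-/

noncomputable def smoothAbs (δ t : ℝ) : ℝ := √(t ^ 2 + δ ^ 2)

noncomputable def smoothSign (δ t : ℝ) : ℝ := t / smoothAbs δ t

noncomputable def smoothSignDefect (δ t : ℝ) : ℝ := δ - δ ^ 2 / smoothAbs δ t

section SmoothSign

variable {δ : ℝ}

theorem smoothAbs_pos (hδ : 0 < δ) (t : ℝ) : 0 < smoothAbs δ t :=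
  Real.sqrt_pos.2 (by positivity)

theorem smoothAbs_nonneg (δ t : ℝ) : 0 ≤ smoothAbs δ t := Real.sqrt_nonneg _

theorem sq_smoothAbs (δ t : ℝ) : smoothAbs δ t ^ 2 = t ^ 2 + δ ^ 2 :=
  Real.sq_sqrt (by positivity)

theorem abs_le_smoothAbs (δ t : ℝ) : |t| ≤ smoothAbs δ t :=
  Real.abs_le_sqrt (by nlinarith)

theorem le_smoothAbs (δ t : ℝ) : δ ≤ smoothAbs δ t :=
  (le_abs_self δ).trans (Real.abs_le_sqrt (by nlinarith))

theorem smoothAbs_le (hδ : 0 ≤ δ) (t : ℝ) : smoothAbs δ t ≤ |t| + δ :=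
  Real.sqrt_le_iff.2 ⟨by positivity, by nlinarith [sq_abs t, abs_nonneg t]⟩

theorem smoothAbs_zero (hδ : 0 ≤ δ) : smoothAbs δ 0 = δ := by
  simp [smoothAbs, Real.sqrt_sq hδ]

theorem continuous_smoothAbs (δ : ℝ) : Continuous (smoothAbs δ) := by
  unfold smoothAbs; fun_prop

theorem hasDerivAt_smoothAbs (hδ : 0 < δ) (t : ℝ) :
    HasDerivAt (smoothAbs δ) (t / smoothAbs δ t) t := by
  refine (((hasDerivAt_pow 2 t).add_const (δ ^ 2)).sqrt (by positivity)).congr_deriv ?_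
  rw [smoothAbs]
  field_simp
  norm_num

theorem hasDerivAt_smoothSign (hδ : 0 < δ) (t : ℝ) :
    HasDerivAt (smoothSign δ) (δ ^ 2 / smoothAbs δ t ^ 3) t := by
  have hS := smoothAbs_pos hδ t
  refine ((hasDerivAt_id' t).div (hasDerivAt_smoothAbs hδ t) hS.ne').congr_deriv ?_
  field_simp
  rw [sq_smoothAbs]
  ring

theorem hasDerivAt_smoothSignDefect (hδ : 0 < δ) (t : ℝ) :
    HasDerivAt (smoothSignDefect δ) (t * (δ ^ 2 / smoothAbs δ t ^ 3)) t := by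
  have hS := smoothAbs_pos hδ t
  refine ((hasDerivAt_const t δ).sub ((hasDerivAt_const t (δ ^ 2)).div
    (hasDerivAt_smoothAbs hδ t) hS.ne')).congr_deriv ?_
  field_simp
  ring

theorem continuous_smoothSign (hδ : 0 < δ) : Continuous (smoothSign δ) :=
  continuous_id.div (continuous_smoothAbs δ) fun t => (smoothAbs_pos hδ t).ne'

theorem continuous_smoothSignDefect (hδ : 0 < δ) : Continuous (smoothSignDefect δ) :=
  continuous_const.sub <|
    continuous_const.div (continuous_smoothAbs δ) fun t => (smoothAbs_pos hδ t).ne'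

theorem continuous_deriv_smoothSign (hδ : 0 < δ) :
    Continuous fun t => δ ^ 2 / smoothAbs δ t ^ 3 :=
  continuous_const.div ((continuous_smoothAbs δ).pow 3) fun t =>
    pow_ne_zero 3 (smoothAbs_pos hδ t).ne'

theorem smoothSign_zero (δ : ℝ) : smoothSign δ 0 = 0 := zero_div _

theorem smoothSignDefect_zero (hδ : 0 < δ) : smoothSignDefect δ 0 = 0 := by
  rw [smoothSignDefect, smoothAbs_zero hδ.le]
  field_simp
  ring

theorem abs_smoothSign_le_one (δ t : ℝ) : |smoothSign δ t| ≤ 1 := by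
  rw [smoothSign, abs_div, abs_of_nonneg (smoothAbs_nonneg δ t)]
  exact div_le_one_of_le₀ (abs_le_smoothAbs δ t) (smoothAbs_nonneg δ t)

theorem abs_sub_le_mul_smoothSign (hδ : 0 < δ) (t : ℝ) : |t| - δ ≤ t * smoothSign δ t := by
  have hS := smoothAbs_pos hδ t
  rw [smoothSign, mul_div_assoc', le_div_iff₀ hS, ← sq, ← sq_abs t]
  nlinarith [smoothAbs_le hδ.le t, abs_le_smoothAbs δ t, le_smoothAbs δ t]

theorem smoothSignDefect_nonneg (hδ : 0 < δ) (t : ℝ) : 0 ≤ smoothSignDefect δ t := by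
  have hS := smoothAbs_pos hδ t
  rw [smoothSignDefect, sub_nonneg, div_le_iff₀ hS]
  nlinarith [le_smoothAbs δ t]

theorem smoothSignDefect_le (hδ : 0 < δ) (t : ℝ) : smoothSignDefect δ t ≤ δ := by
  have := smoothAbs_pos hδ t
  rw [smoothSignDefect]
  linarith [show 0 ≤ δ ^ 2 / smoothAbs δ t by positivity]

end SmoothSign

theorem StrictConcaveOn.lt_of_hasDerivAt_zero {S : Set ℝ} {f : ℝ → ℝ} {x y : ℝ}
    (hf : StrictConcaveOn ℝ S f) (hx : x ∈ S) (hy : y ∈ S) (hyx : y ≠ x)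
    (hfx : HasDerivAt f 0 x) : f y < f x := by
  rcases hyx.lt_or_gt with h | h
  · have := hf.lt_slope_of_hasDerivAt hy hx h hfx
    rw [slope_def_field, lt_div_iff₀ (sub_pos.2 h)] at this
    linarith
  · have := hf.slope_lt_of_hasDerivAt hx hy h hfx
    rw [slope_def_field, div_lt_iff₀ (sub_pos.2 h)] at this
    linarith

theorem nonneg_of_deriv_deriv_neg_of_neg {a b : ℝ} (hab : a < b) {H : ℝ → ℝ}
    (hH : ∀ x ∈ Icc a b, DifferentiableAt ℝ H x ∧ DifferentiableAt ℝ (deriv H) x)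
    (hH'' : ∀ x ∈ Ioo a b, H x < 0 → deriv (deriv H) x < 0)
    (ha : deriv H a = 0) (hb : deriv H b = 0) : ∀ x ∈ Icc a b, 0 ≤ H x := by
  have hcont : ContinuousOn H (Icc a b) :=
    continuousOn_of_forall_continuousAt fun x hx => (hH x hx).1.continuousAt
  by_contra! ⟨z, hz, hHz⟩
  obtain ⟨x₀, hx₀, hmin⟩ := isCompact_Icc.exists_isMinOn ⟨z, hz⟩ hcont
  have hcrit : deriv H x₀ = 0 := by
    rcases hx₀.1.eq_or_lt with rfl | hax
    · exact ha
    rcases hx₀.2.eq_or_lt with rfl | hxb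
    · exact hb
    exact (hmin.isLocalMin (Icc_mem_nhds hax hxb)).deriv_eq_zero
  obtain ⟨r, hr, hball⟩ := Metric.eventually_nhds_iff.1
    ((hH x₀ hx₀).1.continuousAt.eventually_lt_const ((hmin hz).trans_lt hHz))
  set D := Icc a b ∩ Icc (x₀ - r) (x₀ + r)
  have hconc : StrictConcaveOn ℝ D H := by
    refine strictConcaveOn_of_deriv2_neg ((convex_Icc _ _).inter (convex_Icc _ _))
      (hcont.mono inter_subset_left) fun x hx => ?_
    rw [interior_inter, interior_Icc, interior_Icc] at hx
    refine hH'' x hx.1 (hball ?_)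
    rw [Real.dist_eq, abs_lt]
    constructor <;> linarith [hx.2.1, hx.2.2]
  have hlt : a ⊔ (x₀ - r) < b ⊓ (x₀ + r) :=
    max_lt (lt_min hab (by linarith [hx₀.1])) (lt_min (by linarith [hx₀.2]) (by linarith))
  have hD : D.Nontrivial := by
    rw [show D = Icc (a ⊔ (x₀ - r)) (b ⊓ (x₀ + r)) from Icc_inter_Icc]
    exact ⟨_, left_mem_Icc.2 hlt.le, _, right_mem_Icc.2 hlt.le, hlt.ne⟩
  obtain ⟨y, hyD, hyx⟩ := hD.exists_ne x₀
  have hx₀D : x₀ ∈ D := ⟨hx₀, by linarith, by linarith⟩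
  exact (hmin hyD.1).not_gt
    (hconc.lt_of_hasDerivAt_zero hx₀D hyD hyx (hcrit ▸ (hH x₀ hx₀).1.hasDerivAt))

section Resolvent

variable {a b δ : ℝ} {H ξ : ℝ → ℝ}

theorem integral_smoothSign_mul_deriv_deriv_mul (hab : a ≤ b) (hδ : 0 < δ)
    (hH : ∀ x ∈ Icc a b, DifferentiableAt ℝ H x ∧ DifferentiableAt ℝ (deriv H) x)
    (hH'' : ContinuousOn (deriv (deriv H)) (Icc a b))
    (hξ : ∀ x ∈ Icc a b, DifferentiableAt ℝ ξ x ∧ DifferentiableAt ℝ (deriv ξ) x)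
    (hw : ∀ x ∈ Icc a b, DifferentiableAt ℝ (deriv fun y => H y * ξ y) x)
    (hw'' : ContinuousOn (deriv (deriv fun y => H y * ξ y)) (Icc a b))
    (hHa : deriv H a = 0) (hHb : deriv H b = 0) (hξa : ξ a = 0) (hξb : ξ b = 0) :
    ∫ x in a..b, smoothSign δ (ξ x) * deriv (deriv fun y => H y * ξ y) x =
      (∫ x in a..b, deriv (deriv H) x * smoothSignDefect δ (ξ x)) -
        ∫ x in a..b, H x * (δ ^ 2 / smoothAbs δ (ξ x) ^ 3 * deriv ξ x ^ 2) := by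
  set w := fun y => H y * ξ y
  set β' := fun x => δ ^ 2 / smoothAbs δ (ξ x) ^ 3
  have huIcc : uIcc a b = Icc a b := uIcc_of_le hab
  have cξ : ContinuousOn ξ (Icc a b) :=
    continuousOn_of_forall_continuousAt fun x hx => (hξ x hx).1.continuousAt
  have cξ' : ContinuousOn (deriv ξ) (Icc a b) :=
    continuousOn_of_forall_continuousAt fun x hx => (hξ x hx).2.continuousAt
  have cH : ContinuousOn H (Icc a b) :=
    continuousOn_of_forall_continuousAt fun x hx => (hH x hx).1.continuousAt
  have cH' : ContinuousOn (deriv H) (Icc a b) :=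
    continuousOn_of_forall_continuousAt fun x hx => (hH x hx).2.continuousAt
  have cβ' : ContinuousOn β' (Icc a b) := (continuous_deriv_smoothSign hδ).comp_continuousOn cξ
  have ibp₁ := intervalIntegral.integral_mul_deriv_eq_deriv_mul
    (u := fun x => smoothSign δ (ξ x)) (u' := fun x => β' x * deriv ξ x)
    (fun x hx => (hasDerivAt_smoothSign hδ (ξ x)).comp x (hξ x (huIcc ▸ hx)).1.hasDerivAt)
    (fun x hx => (hw x (huIcc ▸ hx)).hasDerivAt)
    ((cβ'.fun_mul cξ').intervalIntegrable_of_Icc hab) (hw''.intervalIntegrable_of_Icc hab)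
  have ibp₂ := intervalIntegral.integral_mul_deriv_eq_deriv_mul
    (v := fun x => smoothSignDefect δ (ξ x)) (v' := fun x => ξ x * β' x * deriv ξ x)
    (fun x hx => (hH x (huIcc ▸ hx)).2.hasDerivAt)
    (fun x hx =>
      (hasDerivAt_smoothSignDefect hδ (ξ x)).comp x (hξ x (huIcc ▸ hx)).1.hasDerivAt)
    (hH''.intervalIntegrable_of_Icc hab)
    (((cξ.fun_mul cβ').fun_mul cξ').intervalIntegrable_of_Icc hab)
  have split : ∫ x in a..b, β' x * deriv ξ x * deriv w x =
      (∫ x in a..b, deriv H x * (ξ x * β' x * deriv ξ x)) +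
        ∫ x in a..b, H x * (β' x * deriv ξ x ^ 2) := by
    rw [← intervalIntegral.integral_add
      ((cH'.fun_mul ((cξ.fun_mul cβ').fun_mul cξ')).intervalIntegrable_of_Icc hab)
      ((cH.fun_mul (cβ'.fun_mul (cξ'.fun_pow 2))).intervalIntegrable_of_Icc hab)]
    refine intervalIntegral.integral_congr fun x hx => ?_
    rw [huIcc] at hx
    rw [deriv_fun_mul (hH x hx).1 (hξ x hx).1]
    ring
  simp only [hξa, hξb, hHa, hHb, smoothSign_zero, smoothSignDefect_zero hδ, zero_mul,
    sub_zero, zero_sub] at ibp₁ ibp₂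
  rw [ibp₁, split, ibp₂]
  ring

theorem integral_abs_le_integral_abs_add_of_resolvent (hab : a ≤ b) (hδ : 0 < δ) {c : ℝ}
    (hc : 0 ≤ c) {g : ℝ → ℝ}
    (hH : ∀ x ∈ Icc a b, DifferentiableAt ℝ H x ∧ DifferentiableAt ℝ (deriv H) x)
    (hH'' : ContinuousOn (deriv (deriv H)) (Icc a b)) (hH_nonneg : ∀ x ∈ Icc a b, 0 ≤ H x)
    (hH_le : ∀ x ∈ Ioo a b, c * deriv (deriv H) x ≤ H x)
    (hHa : deriv H a = 0) (hHb : deriv H b = 0) (hg : ContinuousOn g (Icc a b))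
    (hξ : ∀ x ∈ Icc a b, DifferentiableAt ℝ ξ x ∧ DifferentiableAt ℝ (deriv ξ) x)
    (hw : ∀ x ∈ Icc a b, DifferentiableAt ℝ (deriv fun y => H y * ξ y) x)
    (hw'' : ContinuousOn (deriv (deriv fun y => H y * ξ y)) (Icc a b))
    (hξa : ξ a = 0) (hξb : ξ b = 0)
    (hξg : ∀ x ∈ Ioo a b, ξ x - c * deriv (deriv fun y => H y * ξ y) x = g x) :
    ∫ x in a..b, |ξ x| ≤ (∫ x in a..b, |g x|) + δ * (b - a + ∫ x in a..b, H x) := by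
  have cξ : ContinuousOn ξ (Icc a b) :=
    continuousOn_of_forall_continuousAt fun x hx => (hξ x hx).1.continuousAt
  have cH : ContinuousOn H (Icc a b) :=
    continuousOn_of_forall_continuousAt fun x hx => (hH x hx).1.continuousAt
  have cσ : ContinuousOn (fun x => smoothSign δ (ξ x)) (Icc a b) :=
    (continuous_smoothSign hδ).comp_continuousOn cξ
  have cΓ : ContinuousOn (fun x => smoothSignDefect δ (ξ x)) (Icc a b) :=
    (continuous_smoothSignDefect hδ).comp_continuousOn cξ
  have lower :
      (∫ x in a..b, |ξ x|) - δ * (b - a) ≤ ∫ x in a..b, smoothSign δ (ξ x) * ξ x :=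
    calc (∫ x in a..b, |ξ x|) - δ * (b - a) = ∫ x in a..b, (|ξ x| - δ) := by
          rw [intervalIntegral.integral_sub (cξ.abs.intervalIntegrable_of_Icc hab)
            intervalIntegrable_const, intervalIntegral.integral_const, smul_eq_mul, mul_comm]
      _ ≤ ∫ x in a..b, smoothSign δ (ξ x) * ξ x :=
          intervalIntegral.integral_mono_on hab
            ((cξ.abs.fun_sub continuousOn_const).intervalIntegrable_of_Icc hab)
            ((cσ.fun_mul cξ).intervalIntegrable_of_Icc hab)
            fun x _ => (abs_sub_le_mul_smoothSign hδ (ξ x)).trans_eq (mul_comm _ _)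
  have weak : (∫ x in a..b, smoothSign δ (ξ x) * ξ x) -
      c * ∫ x in a..b, smoothSign δ (ξ x) * deriv (deriv fun y => H y * ξ y) x =
      ∫ x in a..b, smoothSign δ (ξ x) * g x := by
    rw [← intervalIntegral.integral_const_mul, ← intervalIntegral.integral_sub
      ((cσ.fun_mul cξ).intervalIntegrable_of_Icc hab)
      ((continuousOn_const.fun_mul (cσ.fun_mul hw'')).intervalIntegrable_of_Icc hab)]
    refine intervalIntegral.integral_congr_Ioo_of_le hab fun x hx => ?_
    simp only [← hξg x hx]
    ring
  have upper : ∫ x in a..b, smoothSign δ (ξ x) * g x ≤ ∫ x in a..b, |g x| :=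
    intervalIntegral.integral_mono_on hab ((cσ.fun_mul hg).intervalIntegrable_of_Icc hab)
      (hg.abs.intervalIntegrable_of_Icc hab) fun x _ => by
        calc smoothSign δ (ξ x) * g x ≤ |smoothSign δ (ξ x)| * |g x| :=
            (le_abs_self _).trans_eq (abs_mul _ _)
          _ ≤ |g x| := mul_le_of_le_one_left (abs_nonneg _) (abs_smoothSign_le_one δ (ξ x))
  have dissipation :
      0 ≤ ∫ x in a..b, H x * (δ ^ 2 / smoothAbs δ (ξ x) ^ 3 * deriv ξ x ^ 2) :=
    intervalIntegral.integral_nonneg hab fun x hx =>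
      mul_nonneg (hH_nonneg x hx) (by have := smoothAbs_pos hδ (ξ x); positivity)
  have defect : c * ∫ x in a..b, deriv (deriv H) x * smoothSignDefect δ (ξ x) ≤
      δ * ∫ x in a..b, H x := by
    rw [← intervalIntegral.integral_const_mul, ← intervalIntegral.integral_const_mul]
    refine intervalIntegral.integral_mono_on_of_le_Ioo hab
      ((continuousOn_const.fun_mul (hH''.fun_mul cΓ)).intervalIntegrable_of_Icc hab)
      ((continuousOn_const.fun_mul cH).intervalIntegrable_of_Icc hab) fun x hx => ?_
    have hΓ := smoothSignDefect_nonneg hδ (ξ x)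
    calc c * (deriv (deriv H) x * smoothSignDefect δ (ξ x))
        = c * deriv (deriv H) x * smoothSignDefect δ (ξ x) := by ring
      _ ≤ H x * smoothSignDefect δ (ξ x) := mul_le_mul_of_nonneg_right (hH_le x hx) hΓ
      _ ≤ δ * H x := by
        nlinarith [smoothSignDefect_le hδ (ξ x), hH_nonneg x (Ioo_subset_Icc_self hx)]
  rw [integral_smoothSign_mul_deriv_deriv_mul hab hδ hH hH'' hξ hw hw'' hHa hHb hξa hξb,
    mul_sub] at weak
  nlinarith [mul_nonneg hc dissipation]

end Resolvent

theorem L1_contraction_degenerate_resolvent_general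
    (L ε : ℝ) (hL : 0 < L)
    (h H g ξ : ℝ → ℝ)
    (hnn : ∀ x ∈ Icc (0:ℝ) L, 0 ≤ h x)
    (hHreg : ∀ x ∈ Icc (0:ℝ) L, DifferentiableAt ℝ H x ∧ DifferentiableAt ℝ (deriv H) x)
    (hHcont : ContinuousOn (deriv (deriv H)) (Icc 0 L))
    (hHeq : ∀ x ∈ Ioo (0:ℝ) L, H x - ε ^ 2 * deriv (deriv H) x = h x)
    (hHbc : deriv H 0 = 0 ∧ deriv H L = 0)
    (hgcont : ContinuousOn g (Icc 0 L))
    (hξreg : ∀ x ∈ Icc (0:ℝ) L, DifferentiableAt ℝ ξ x ∧ DifferentiableAt ℝ (deriv ξ) x)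
    (hξreg' : ∀ x ∈ Icc (0:ℝ) L, DifferentiableAt ℝ (fun y => H y * ξ y) x ∧
      DifferentiableAt ℝ (deriv (fun y => H y * ξ y)) x)
    (hξcont : ContinuousOn (deriv (deriv (fun y => H y * ξ y))) (Icc 0 L))
    (hξbc : ξ 0 = 0 ∧ ξ L = 0)
    (hξeq : ∀ x ∈ Ioo (0:ℝ) L, ξ x - ε ^ 2 * deriv (deriv (fun y => H y * ξ y)) x = g x) :
    (∫ x in (0:ℝ)..L, |ξ x|) ≤ ∫ x in (0:ℝ)..L, |g x| := by
  have hH_le : ∀ x ∈ Ioo (0:ℝ) L, ε ^ 2 * deriv (deriv H) x ≤ H x := fun x hx => by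
    linarith [hHeq x hx, hnn x (Ioo_subset_Icc_self hx)]
  have hH_nonneg : ∀ x ∈ Icc (0:ℝ) L, 0 ≤ H x :=
    nonneg_of_deriv_deriv_neg_of_neg hL hHreg
      (fun x hx hHx => neg_of_mul_neg_right ((hH_le x hx).trans_lt hHx) (sq_nonneg ε))
      hHbc.1 hHbc.2
  have hC : 0 < L - 0 + ∫ x in (0:ℝ)..L, H x := by
    linarith [intervalIntegral.integral_nonneg (μ := volume) hL.le hH_nonneg]
  refine le_of_forall_pos_le_add fun η hη => ?_
  have := integral_abs_le_integral_abs_add_of_resolvent hL.le (div_pos hη hC) (sq_nonneg ε)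
    hHreg hHcont hH_nonneg hH_le hHbc.1 hHbc.2 hgcont hξreg (fun x hx => (hξreg' x hx).2) hξcont
    hξbc.1 hξbc.2 hξeq
  rwa [div_mul_cancel₀ η hC.ne'] at this

/-- `L₁` contraction for the degenerate resolvent:
if `H - ε²∂ₓ²H = h` with Neumann conditions (`h ≥ 0` continuous), `ξ(0) = ξ(L) = 0`
and `ξ - ε²∂ₓ²(Hξ) = g` on `(0,L)`, then `‖ξ‖_{L₁(0,L)} ≤ ‖g‖_{L₁(0,L)}`. -/
theorem L1_contraction_degenerate_resolvent
    (L ε : ℝ) (hL : 0 < L) (hε : 0 < ε)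
    (h H g ξ : ℝ → ℝ)
    (hcont : ContinuousOn h (Icc 0 L))
    (hnn : ∀ x ∈ Icc (0:ℝ) L, 0 ≤ h x)
    (hHreg : ∀ x ∈ Icc (0:ℝ) L, DifferentiableAt ℝ H x ∧ DifferentiableAt ℝ (deriv H) x)
    (hHcont : ContinuousOn (deriv (deriv H)) (Icc 0 L))
    (hHeq : ∀ x ∈ Ioo (0:ℝ) L, H x - ε ^ 2 * deriv (deriv H) x = h x)
    (hHbc : deriv H 0 = 0 ∧ deriv H L = 0)
    (hgcont : ContinuousOn g (Icc 0 L))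
    (hξreg : ∀ x ∈ Icc (0:ℝ) L, DifferentiableAt ℝ ξ x ∧ DifferentiableAt ℝ (deriv ξ) x)
    (hξreg' : ∀ x ∈ Icc (0:ℝ) L, DifferentiableAt ℝ (fun y => H y * ξ y) x ∧
      DifferentiableAt ℝ (deriv (fun y => H y * ξ y)) x)
    (hξcont : ContinuousOn (deriv (deriv (fun y => H y * ξ y))) (Icc 0 L))
    (hξbc : ξ 0 = 0 ∧ ξ L = 0)
    (hξeq : ∀ x ∈ Ioo (0:ℝ) L, ξ x - ε ^ 2 * deriv (deriv (fun y => H y * ξ y)) x = g x) :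
    (∫ x in (0:ℝ)..L, |ξ x|) ≤ ∫ x in (0:ℝ)..L, |g x| :=
  L1_contraction_degenerate_resolvent_general L ε hL h H g ξ hnn hHreg hHcont hHeq hHbc hgcont hξreg
    hξreg' hξcont hξbc hξeq
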